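/- For the 2D step set S = {(-1,0),(0,-1),(1,1)} (Kreweras model), the birational maps Φ_1: (x,y) ↦ (1/(xy), y) and Φ_2: (x,y) ↦ (x, 1/(xy)) generate a group of order 6 (isomorphic to S_3) under composition. -/

import Mathlib

/-- The field of rational functions in two variables `x, y` over `ℚ`. -/
abbrev K2 : Type := FractionRing (MvPolynomial (Fin 2) ℚ)

noncomputable def X2 (i : Fin 2) : K2 :=
  algebraMap (MvPolynomial (Fin 2) ℚ) K2 (MvPolynomial.X i)

/-!
The monomials `x, 1/(xy), y` have product `1`. Hence for every permutation `σ` of them, the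
substitution sending `x` and `y` to their `σ`-images sends `1/(xy)` to its `σ`-image as well.
The two images generate `ℚ(x, y)` as a field, so, the transcendence degree being `2`, they are
algebraically independent and the substitution is an automorphism. This embeds `S₃` into
`Aut ℚ(x, y)`, and `Φ₁`, `Φ₂` are the images of two transpositions generating `S₃`.
-/

open Cardinal MvPolynomial Set Equiv

universe u

theorem AlgebraicIndependent.of_adjoin_eq_top {k K ι : Type u} [Field k] [Field K] [Algebra k K]
    [Finite ι] {v : ι → K} (hv : IntermediateField.adjoin k (range v) = ⊤)
    (h : #ι ≤ Algebra.trdeg k K) : AlgebraicIndependent k v := by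
  have : Algebra.IsAlgebraic (Algebra.adjoin k (range v)) K := by
    rw [← IntermediateField.isAlgebraic_adjoin_iff_top, hv]
    infer_instance
  exact (Algebra.IsAlgebraic.isTranscendenceBasis_of_le_trdeg_of_finite k v h).1

section MvPolynomialFractionRing

variable {σ k K : Type u} [Field k] [Field K] [Algebra (MvPolynomial σ k) K]
  [IsFractionRing (MvPolynomial σ k) K] [Algebra k K] [IsScalarTower k (MvPolynomial σ k) K]

variable (k K) in
theorem IsFractionRing.mvPolynomial_card_le_trdeg : #σ ≤ Algebra.trdeg k K := by
  simpa using trdeg_le_of_injective (IsScalarTower.toAlgHom k (MvPolynomial σ k) K)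
    (IsFractionRing.injective (MvPolynomial σ k) K)

variable (k K) in
theorem IsFractionRing.mvPolynomial_adjoin_range_X :
    IntermediateField.adjoin k (range fun i => algebraMap (MvPolynomial σ k) K (X i)) = ⊤ := by
  rw [← IsFractionRing.algHom_fieldRange_eq_of_comp_eq_of_range_eq (f := AlgHom.id k K)
    (g := IsScalarTower.toAlgHom k (MvPolynomial σ k) K) rfl]
  · exact SetLike.coe_injective (by simp)
  · rw [← Algebra.map_top, ← adjoin_range_X, AlgHom.map_adjoin, ← range_comp]
    rfl

end MvPolynomialFractionRing

theorem IsFractionRing.mvPolynomial_ringHom_ext {σ K L : Type*} [Field K] [Field L]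
    [Algebra (MvPolynomial σ ℚ) K] [IsFractionRing (MvPolynomial σ ℚ) K] {f g : K →+* L}
    (h : ∀ i, f (algebraMap (MvPolynomial σ ℚ) K (X i)) =
      g (algebraMap (MvPolynomial σ ℚ) K (X i))) :
    f = g :=
  IsFractionRing.ringHom_ext (A := MvPolynomial σ ℚ) <| RingHom.congr_fun <|
    ringHom_ext' (f := f.comp (algebraMap _ _)) (g := g.comp (algebraMap _ _))
      (Subsingleton.elim _ _) h

theorem Equiv.Perm.closure_swap_zero_one_swap_one_two :
    Subgroup.closure {swap (0 : Fin 3) 1, swap 1 2} = ⊤ := by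
  refine Subgroup.closure_eq_top_of_mclosure_eq_top ?_
  convert mclosure_swap_castSucc_succ 2
  ext
  simp [Fin.exists_fin_two, eq_comm]

namespace Kreweras

theorem X2_ne_zero (i : Fin 2) : X2 i ≠ 0 := by
  simp [X2]

theorem X2_ne_inv_X2_mul_X2 (i : Fin 2) : X2 i ≠ (X2 0 * X2 1)⁻¹ := by
  intro h
  rw [← mul_eq_one_iff_eq_inv₀ (mul_ne_zero (X2_ne_zero 0) (X2_ne_zero 1))] at h
  have h' : (X i * (X 0 * X 1) : MvPolynomial (Fin 2) ℚ) = 1 :=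
    IsFractionRing.injective _ K2 (by simpa [X2] using h)
  simpa using congrArg constantCoeff h'

/-- Ordered so that `Φ₁` and `Φ₂` permute them as the transpositions `(0 1)` and `(1 2)`. -/
noncomputable def monomial : Fin 3 → K2 := ![X2 0, (X2 0 * X2 1)⁻¹, X2 1]

theorem monomial_injective : Function.Injective monomial := by
  have hxy : X2 0 ≠ X2 1 := fun h =>
    absurd (X_injective (IsFractionRing.injective _ K2 h)) (by decide)
  have hx := X2_ne_inv_X2_mul_X2 0
  have hy := X2_ne_inv_X2_mul_X2 1
  intro i j h
  fin_cases i <;> fin_cases j <;> simp_all [monomial, eq_comm]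

theorem prod_monomial : ∏ i, monomial i = 1 := by
  simp [monomial, Fin.prod_univ_three, mul_comm, X2_ne_zero]

theorem monomial_perm_one_eq_inv (σ : Perm (Fin 3)) :
    monomial (σ 1) = (monomial (σ 0) * monomial (σ 2))⁻¹ := by
  refine eq_inv_of_mul_eq_one_left ?_
  rw [← prod_monomial, ← Equiv.prod_comp σ, Fin.prod_univ_three]
  ring

noncomputable def permImage (σ : Perm (Fin 3)) : Fin 2 → K2 :=
  ![monomial (σ 0), monomial (σ 2)]

theorem adjoin_range_permImage (σ : Perm (Fin 3)) :
    IntermediateField.adjoin ℚ (range (permImage σ)) = ⊤ := by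
  set F := IntermediateField.adjoin ℚ (range (permImage σ))
  have h0 : monomial (σ 0) ∈ F := IntermediateField.subset_adjoin _ _ ⟨0, rfl⟩
  have h2 : monomial (σ 2) ∈ F := IntermediateField.subset_adjoin _ _ ⟨1, rfl⟩
  have hσ : ∀ i, monomial (σ i) ∈ F
    | 0 => h0
    | 1 => monomial_perm_one_eq_inv σ ▸ inv_mem (mul_mem h0 h2)
    | 2 => h2
  have hX : ∀ i, X2 i ∈ F
    | 0 => by simpa [monomial] using hσ (σ⁻¹ 0)
    | 1 => by simpa [monomial] using hσ (σ⁻¹ 2)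
  rw [eq_top_iff, ← IsFractionRing.mvPolynomial_adjoin_range_X (σ := Fin 2) ℚ K2,
    IntermediateField.adjoin_le_iff, range_subset_iff]
  exact hX

theorem algebraicIndependent_permImage (σ : Perm (Fin 3)) :
    AlgebraicIndependent ℚ (permImage σ) :=
  .of_adjoin_eq_top (adjoin_range_permImage σ)
    (IsFractionRing.mvPolynomial_card_le_trdeg (σ := Fin 2) ℚ K2)

noncomputable def permEnd (σ : Perm (Fin 3)) : K2 →+* K2 :=
  IsFractionRing.lift (A := MvPolynomial (Fin 2) ℚ)
    (g := (aeval (R := ℚ) (permImage σ)).toRingHom)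
    (algebraicIndependent_iff_injective_aeval.1 (algebraicIndependent_permImage σ))

theorem permEnd_X2 (σ : Perm (Fin 3)) (i : Fin 2) : permEnd σ (X2 i) = permImage σ i := by
  rw [permEnd, X2, IsFractionRing.lift_algebraMap]
  exact aeval_X _ i

theorem permEnd_monomial (σ : Perm (Fin 3)) (i : Fin 3) :
    permEnd σ (monomial i) = monomial (σ i) := by
  have h0 : permEnd σ (X2 0) = monomial (σ 0) := permEnd_X2 σ 0
  have h2 : permEnd σ (X2 1) = monomial (σ 2) := permEnd_X2 σ 1
  match i with
  | 0 => exact h0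
  | 1 =>
    change permEnd σ (X2 0 * X2 1)⁻¹ = _
    rw [map_inv₀, map_mul, h0, h2, monomial_perm_one_eq_inv]
  | 2 => exact h2

theorem ringHom_ext_monomial {f g : K2 →+* K2} (h : ∀ i, f (monomial i) = g (monomial i)) :
    f = g :=
  IsFractionRing.mvPolynomial_ringHom_ext (σ := Fin 2) <| Fin.forall_fin_two.2 ⟨h 0, h 2⟩

theorem permEnd_comp (σ τ : Perm (Fin 3)) : (permEnd σ).comp (permEnd τ) = permEnd (σ * τ) :=
  ringHom_ext_monomial fun i => by
    simp only [RingHom.comp_apply, permEnd_monomial, Perm.mul_apply]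

theorem permEnd_one : permEnd 1 = RingHom.id K2 :=
  ringHom_ext_monomial fun i => by simp only [permEnd_monomial, Perm.one_apply, RingHom.id_apply]

noncomputable def permAut : Perm (Fin 3) →* RingAut K2 where
  toFun σ := .ofRingHom (permEnd σ) (permEnd σ⁻¹)
    (by rw [permEnd_comp, mul_inv_cancel, permEnd_one])
    (by rw [permEnd_comp, inv_mul_cancel, permEnd_one])
  map_one' := RingEquiv.ext fun x => RingHom.congr_fun permEnd_one x
  map_mul' σ τ := RingEquiv.ext fun x => (RingHom.congr_fun (permEnd_comp σ τ) x).symm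

theorem permAut_monomial (σ : Perm (Fin 3)) (i : Fin 3) :
    permAut σ (monomial i) = monomial (σ i) :=
  permEnd_monomial σ i

theorem permAut_injective : Function.Injective permAut := by
  refine (injective_iff_map_eq_one permAut).2 fun σ hσ => Equiv.ext fun i => monomial_injective ?_
  rw [← permAut_monomial, hσ, Perm.one_apply, RingAut.one_apply]

end Kreweras

theorem kreweras_group_order_six :
    ∃ φ₁ φ₂ : RingAut K2,
      φ₁ (X2 0) = (X2 0 * X2 1)⁻¹ ∧ φ₁ (X2 1) = X2 1 ∧
      φ₂ (X2 0) = X2 0 ∧ φ₂ (X2 1) = (X2 0 * X2 1)⁻¹ ∧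
      Nat.card (Subgroup.closure {φ₁, φ₂} : Subgroup (RingAut K2)) = 6 := by
  open Kreweras in
  refine ⟨permAut (swap 0 1), permAut (swap 1 2), permAut_monomial _ 0, permAut_monomial _ 2,
    permAut_monomial _ 0, permAut_monomial _ 2, ?_⟩
  rw [← Set.image_pair, ← MonoidHom.map_closure, Perm.closure_swap_zero_one_swap_one_two,
    Subgroup.card_map_of_injective Kreweras.permAut_injective, Subgroup.card_top, Nat.card_perm,
    Nat.card_fin]
  rfl
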